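/- Let X be a Bernoulli random variable with P(X=1) = min(r,1) and Z a Poisson(q) random variable, coupled through a common uniform U as X = 1(U > 1 - min(r,1)), Z = G⁻¹(U;q), with 0 ≤ q ≤ r. Then P(|X - Z| ≥ 1) ≤ r - q + q². -/
import Mathlib


open MeasureTheory

/-- The CDF of a Poisson distribution with mean `q`, evaluated at `m`. -/
noncomputable def poissonCDF (q : ℝ) (m : ℕ) : ℝ :=
  ∑ i ∈ Finset.range (m + 1), Real.exp (-q) * q ^ i / (Nat.factorial i)

/-- The generalized inverse `G⁻¹(u; q) = inf {m : G(m; q) ≥ u}` of the Poisson CDF. -/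
noncomputable def poissonInvCDF (q : ℝ) (u : ℝ) : ℕ :=
  sInf {m : ℕ | u ≤ poissonCDF q m}

lemma poissonCDF_zero' (q : ℝ) : poissonCDF q 0 = Real.exp (-q) := by
  simp [poissonCDF]

lemma poissonCDF_one' (q : ℝ) : poissonCDF q 1 = Real.exp (-q) * (1 + q) := by
  simp [poissonCDF, Finset.sum_range_succ]
  ring

theorem bernoulli_poisson_coupling_le (r q : ℝ) (hq : 0 ≤ q) (hqr : q ≤ r) :
    (volume.restrict (Set.Icc (0 : ℝ) 1))
      {u : ℝ | 1 ≤ |(if 1 - min r 1 < u then (1 : ℝ) else 0) - (poissonInvCDF q u : ℝ)|}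
    ≤ ENNReal.ofReal (r - q + q ^ 2) := by
  set p : ℝ := min r 1 with hp
  have hexp : 1 - q ≤ Real.exp (-q) := by
    have := Real.add_one_le_exp (-q); linarith
  have hexp0 : (0:ℝ) ≤ Real.exp (-q) := (Real.exp_pos _).le
  have h1p : 1 - p ≤ Real.exp (-q) := by
    rcases le_total r 1 with h | h
    · have : p = r := min_eq_left h
      linarith
    · have : p = 1 := min_eq_right h
      simp [this, hexp0]
  have hG1 : Real.exp (-q) * (1 + q) ≤ 1 := by
    have h := Real.add_one_le_exp q
    have : Real.exp (-q) * (1 + q) ≤ Real.exp (-q) * Real.exp q := by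
      apply mul_le_mul_of_nonneg_left (by linarith) hexp0
    rwa [← Real.exp_add, neg_add_cancel, Real.exp_zero] at this
  have hsub : {u : ℝ | 1 ≤ |(if 1 - p < u then (1 : ℝ) else 0) - (poissonInvCDF q u : ℝ)|}
      ∩ Set.Icc (0:ℝ) 1 ⊆
      Set.Ioc (1 - p) (Real.exp (-q)) ∪ Set.Ioc (Real.exp (-q) * (1 + q)) 1 := by
    rintro u ⟨hu, hu0, hu1⟩
    simp only [Set.mem_setOf_eq] at hu
    by_cases hx : 1 - p < u
    · rw [if_pos hx] at hu
      have hz1 : poissonInvCDF q u ≠ 1 := by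
        intro h; rw [h] at hu; norm_num at hu
      rcases Nat.eq_zero_or_pos (poissonInvCDF q u) with h0 | hpos
      · rcases Nat.sInf_eq_zero.mp h0 with hmem | hempty
        · left
          simp only [Set.mem_setOf_eq, poissonCDF_zero'] at hmem
          exact ⟨hx, hmem⟩
        · right
          have h1 : (1:ℕ) ∉ {m : ℕ | u ≤ poissonCDF q m} := by
            rw [hempty]; exact Set.notMem_empty 1
          simp only [Set.mem_setOf_eq, not_le] at h1
          rw [poissonCDF_one'] at h1
          exact ⟨h1, hu1⟩
      · have h2 : 2 ≤ poissonInvCDF q u := by omega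
        right
        have h1 : (1:ℕ) ∉ {m : ℕ | u ≤ poissonCDF q m} := by
          intro hmem
          have := Nat.sInf_le hmem
          unfold poissonInvCDF at h2
          omega
        simp only [Set.mem_setOf_eq, not_le] at h1
        rw [poissonCDF_one'] at h1
        exact ⟨h1, hu1⟩
    · rw [if_neg hx] at hu
      push_neg at hx
      have hzpos : poissonInvCDF q u ≠ 0 := by
        intro h; rw [h] at hu; norm_num at hu
      have h0 : (0:ℕ) ∈ {m : ℕ | u ≤ poissonCDF q m} ∨
          {m : ℕ | u ≤ poissonCDF q m} = ∅ → False := by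
        intro h
        exact hzpos (Nat.sInf_eq_zero.mpr h)
      have h0' : (0:ℕ) ∉ {m : ℕ | u ≤ poissonCDF q m} := fun h => h0 (Or.inl h)
      simp only [Set.mem_setOf_eq, not_le, poissonCDF_zero'] at h0'
      exact absurd (hx.trans h1p) (not_le.mpr h0')
  rw [Measure.restrict_apply' measurableSet_Icc]
  refine le_trans (measure_mono hsub) ?_
  refine le_trans (measure_union_le _ _) ?_
  rw [Real.volume_Ioc, Real.volume_Ioc,
    ← ENNReal.ofReal_add (by linarith) (by linarith)]
  apply ENNReal.ofReal_le_ofReal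
  have hpr : p ≤ r := min_le_left _ _
  nlinarith [mul_le_mul_of_nonneg_left hexp hq]
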